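/- arXiv:math/0307044 — 6 statements merged into one kernel-verified Lean document; each statement's English description precedes it below -/
import Mathlib

section
/- The cubic curve x ↦ (x, x², x³) from ℝ to ℝ³ is totally skew: for any two distinct parameters x ≠ y, the tangent lines to the curve at (x,x²,x³) and (y,y²,y³) are neither parallel nor intersecting. -/
/-- The cubic curve `x ↦ (x, x², x³)` in `ℝ³` is totally skew: the tangent lines at
distinct parameters are neither parallel nor intersecting. -/
theorem cubic_curve_totally_skew (x y : ℝ) (hxy : x ≠ y) :
    (¬ ∃ c : ℝ, (![1, 2*y, 3*y^2] : Fin 3 → ℝ) = c • (![1, 2*x, 3*x^2] : Fin 3 → ℝ)) ∧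
    (∀ s t : ℝ,
      (![x, x^2, x^3] : Fin 3 → ℝ) + s • (![1, 2*x, 3*x^2] : Fin 3 → ℝ) ≠
      (![y, y^2, y^3] : Fin 3 → ℝ) + t • (![1, 2*y, 3*y^2] : Fin 3 → ℝ)) := by
  have hd : x - y ≠ 0 := sub_ne_zero.mpr hxy
  constructor
  · rintro ⟨c, hc⟩
    have h0 := congrFun hc 0
    have h1 := congrFun hc 1
    simp [Pi.smul_apply] at h0 h1
    subst h0
    simp at h1
    exact hxy h1.symm
  · intro s t h
    have h0 := congrFun h 0
    have h1 := congrFun h 1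
    have h2 := congrFun h 2
    simp [Pi.smul_apply] at h0 h1 h2
    have key : (x - y) * ((x - y) + 2 * s) = 0 := by linear_combination h1 - 2*y*h0
    have hs : s = (y - x) / 2 := by
      have := (mul_eq_zero.mp key).resolve_left hd
      linarith
    have ht : t = (x - y) / 2 := by rw [hs] at h0; linarith
    rw [hs, ht] at h2
    have h3 : (x - y) ^ 3 = 0 := by linear_combination (-2 : ℝ) * h2
    exact hd (pow_eq_zero_iff three_ne_zero |>.mp h3)
end

section
/- The curve z ↦ (z, z²) from the unit circle in ℂ to ℂ² ≅ ℝ⁴ is totally skew: for distinct points z ≠ w on the unit circle, the real tangent lines to the curve at (z,z²) and (w,w²) are neither parallel nor intersecting. -/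
/-- The curve `z ↦ (z, z²)` on the unit circle in `ℂ`, viewed in `ℂ² ≅ ℝ⁴`, is totally
skew: for distinct points of the circle the real tangent lines are neither parallel
nor intersecting.  The real tangent direction at `z` is `(iz, 2iz²)`. -/
theorem circle_curve_totally_skew (z w : ℂ) (hz : ‖z‖ = 1) (hw : ‖w‖ = 1) (hzw : z ≠ w) :
    (¬ ∃ c : ℝ, ((Complex.I * w, 2 * Complex.I * w^2) : ℂ × ℂ) =
        c • ((Complex.I * z, 2 * Complex.I * z^2) : ℂ × ℂ)) ∧
    (∀ s t : ℝ,
      ((z, z^2) : ℂ × ℂ) + s • ((Complex.I * z, 2 * Complex.I * z^2) : ℂ × ℂ) ≠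
      ((w, w^2) : ℂ × ℂ) + t • ((Complex.I * w, 2 * Complex.I * w^2) : ℂ × ℂ)) := by
  have hz0 : z ≠ 0 := by intro h; rw [h] at hz; simp at hz
  have hw0 : w ≠ 0 := by intro h; rw [h] at hw; simp at hw
  have hI : (Complex.I : ℂ) ≠ 0 := Complex.I_ne_zero
  constructor
  · rintro ⟨c, h⟩
    have e1 : Complex.I * w = (c : ℂ) * (Complex.I * z) := by
      have := congrArg Prod.fst h
      simpa [Complex.real_smul] using this
    have e2 : 2 * Complex.I * w ^ 2 = (c : ℂ) * (2 * Complex.I * z ^ 2) := by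
      have := congrArg Prod.snd h
      simpa [Complex.real_smul] using this
    have hw1 : w = (c : ℂ) * z :=
      mul_left_cancel₀ hI (show Complex.I * w = Complex.I * ((c : ℂ) * z) by
        linear_combination e1)
    have hw2 : ((c : ℂ) * ((c : ℂ) - 1)) * z ^ 2 = 0 := by
      have h2I : (2 * Complex.I : ℂ) ≠ 0 := by simp [Complex.ext_iff]
      have hthis : w ^ 2 = (c : ℂ) * z ^ 2 :=
        mul_left_cancel₀ h2I (show 2 * Complex.I * w ^ 2 =
          2 * Complex.I * ((c : ℂ) * z ^ 2) by linear_combination e2)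
      linear_combination hthis - (w + (c : ℂ) * z) * hw1
    have hc : (c : ℂ) = 0 ∨ (c : ℂ) - 1 = 0 := by
      rcases mul_eq_zero.mp hw2 with h' | h'
      · exact mul_eq_zero.mp h'
      · exact absurd h' (pow_ne_zero _ hz0)
    rcases hc with h' | h'
    · rw [h', zero_mul] at hw1; exact hw0 hw1
    · have : w = z := by rw [hw1, sub_eq_zero.mp h', one_mul]
      exact hzw this.symm
  · intro s t h
    have e1 : z * (1 + (s : ℂ) * Complex.I) = w * (1 + (t : ℂ) * Complex.I) := by
      have := congrArg Prod.fst h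
      simp only [Prod.fst_add, Prod.smul_fst, Complex.real_smul] at this
      linear_combination this
    have e2 : z ^ 2 * (1 + 2 * (s : ℂ) * Complex.I) =
        w ^ 2 * (1 + 2 * (t : ℂ) * Complex.I) := by
      have := congrArg Prod.snd h
      simp only [Prod.snd_add, Prod.smul_snd, Complex.real_smul] at this
      linear_combination this
    have key' : z ^ 2 * ((1 + (s : ℂ) * Complex.I) ^ 2 * (1 + 2 * (t : ℂ) * Complex.I)
        - (1 + 2 * (s : ℂ) * Complex.I) * (1 + (t : ℂ) * Complex.I) ^ 2) = 0 := by
      linear_combination ((z * (1 + (s : ℂ) * Complex.I) +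
          w * (1 + (t : ℂ) * Complex.I)) * (1 + 2 * (t : ℂ) * Complex.I)) * e1 -
        (1 + (t : ℂ) * Complex.I) ^ 2 * e2
    have hb := (mul_eq_zero.mp key').resolve_left (pow_ne_zero _ hz0)
    have key2 : (((t ^ 2 - s ^ 2 : ℝ) : ℂ) +
        ((2 * s * t * (t - s) : ℝ) : ℂ) * Complex.I) = 0 := by
      push_cast
      linear_combination hb - ((s : ℂ) ^ 2 - (t : ℂ) ^ 2
        + 2 * (s : ℂ) * (t : ℂ) * ((s : ℂ) - (t : ℂ)) * Complex.I) * Complex.I_sq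
    have hre : t ^ 2 - s ^ 2 = 0 := by
      have := congrArg Complex.re key2
      simpa [-Complex.ofReal_pow] using this
    have him : 2 * s * t * (t - s) = 0 := by
      have := congrArg Complex.im key2
      simpa [-Complex.ofReal_pow] using this
    have hst : s = t := by
      have h3 : (t - s) * (t + s) = 0 := by linear_combination hre
      rcases mul_eq_zero.mp h3 with h4 | h4
      · linarith
      · have hts : t = -s := by linarith
        subst hts
        have h5 : s ^ 3 = 0 := by linear_combination him / 4
        have h6 : s = 0 := by
          exact pow_eq_zero_iff (by norm_num : (3:ℕ) ≠ 0) |>.mp h5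
        rw [h6]; ring
    subst hst
    have hne : (1 + (s : ℂ) * Complex.I) ≠ 0 := by
      intro hc
      have := congrArg Complex.re hc
      simp at this
    exact hzw (mul_right_cancel₀ hne e1)
end

section
/- Two affine subspaces V, W of ℝᴺ are skew (every line in V is skew to every line in W) if and only if the linear subspaces i(V) and i(W) of ℝᴺ⁺¹ have trivial intersection, where i sends an affine subspace A to the linear span of {(a,1) : a ∈ A}. -/
lemma aux_mem_span_iff (N : ℕ) (V : AffineSubspace ℝ (Fin N → ℝ))
    (p : Fin N → ℝ) (hp : p ∈ V) (x : Fin N → ℝ) (t : ℝ) :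
    (x, t) ∈ Submodule.span ℝ ((fun a => (a, (1 : ℝ))) '' (V : Set (Fin N → ℝ))) ↔
      x - t • p ∈ V.direction := by
  constructor
  · intro h
    have : ∀ z : (Fin N → ℝ) × ℝ,
        z ∈ Submodule.span ℝ ((fun a => (a, (1 : ℝ))) '' (V : Set (Fin N → ℝ))) →
        z.1 - z.2 • p ∈ V.direction := by
      intro z hz
      induction hz using Submodule.span_induction with
      | mem y hy =>
        obtain ⟨a, ha, rfl⟩ := hy
        simpa using AffineSubspace.vsub_mem_direction ha hp
      | zero => simp
      | add y z hy hz ihy ihz =>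
        have : (y + z).1 - (y + z).2 • p = (y.1 - y.2 • p) + (z.1 - z.2 • p) := by
          simp [Prod.fst_add, Prod.snd_add, add_smul]; abel
        rw [this]; exact Submodule.add_mem _ ihy ihz
      | smul c y hy ihy =>
        have : (c • y).1 - (c • y).2 • p = c • (y.1 - y.2 • p) := by
          simp [smul_sub, smul_smul]
        rw [this]; exact Submodule.smul_mem _ c ihy
    exact this (x, t) h
  · intro h
    obtain ⟨a, ha, b, hb, hab⟩ :=
      (AffineSubspace.mem_direction_iff_eq_vsub ⟨p, hp⟩ (x - t • p)).mp h
    have hxt : (x, t) = t • ((p, 1) : (Fin N → ℝ) × ℝ) + ((a, 1) - (b, 1)) := by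
      have h1 : x = t • p + (a - b) := by
        have h2 : x - t • p = a - b := hab
        rw [← h2]; abel
      rw [Prod.ext_iff]
      constructor
      · simpa using h1
      · simp
    rw [hxt]
    have hmem : ∀ c ∈ V, ((c, (1 : ℝ)) : (Fin N → ℝ) × ℝ) ∈
        Submodule.span ℝ ((fun a => (a, (1 : ℝ))) '' (V : Set (Fin N → ℝ))) := fun c hc =>
      Submodule.subset_span ⟨c, hc, rfl⟩
    exact Submodule.add_mem _ (Submodule.smul_mem _ t (hmem p hp))
      (Submodule.sub_mem _ (hmem a ha) (hmem b hb))

/-- Two affine subspaces `V`, `W` of `ℝᴺ` (each nonempty and containing at least one line)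
are skew — every line contained in `V` is skew to every line contained in `W` — if and
only if the linear subspaces `i(V)` and `i(W)` of `ℝᴺ⁺¹ = ℝᴺ × ℝ` have trivial
intersection, where `i(A)` is the linear span of `{(a,1) : a ∈ A}`. -/
theorem affine_skew_iff_trivial_intersection (N : ℕ)
    (V W : AffineSubspace ℝ (Fin N → ℝ))
    (hV : ∃ (p v : Fin N → ℝ), v ≠ 0 ∧ ∀ t : ℝ, p + t • v ∈ V)
    (hW : ∃ (p v : Fin N → ℝ), v ≠ 0 ∧ ∀ t : ℝ, p + t • v ∈ W) :
    (∀ (p₁ v₁ p₂ v₂ : Fin N → ℝ), v₁ ≠ 0 → v₂ ≠ 0 →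
        (∀ t : ℝ, p₁ + t • v₁ ∈ V) → (∀ t : ℝ, p₂ + t • v₂ ∈ W) →
        (¬ ∃ c : ℝ, v₂ = c • v₁) ∧ (∀ s t : ℝ, p₁ + s • v₁ ≠ p₂ + t • v₂))
    ↔
    (Submodule.span ℝ ((fun a => (a, (1 : ℝ))) '' (V : Set (Fin N → ℝ))) ⊓
      Submodule.span ℝ ((fun a => (a, (1 : ℝ))) '' (W : Set (Fin N → ℝ))) = ⊥) := by
  obtain ⟨pV, vV, hvV, hlV⟩ := hV
  obtain ⟨pW, vW, hvW, hlW⟩ := hW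
  have hpV : pV ∈ V := by simpa using hlV 0
  have hpW : pW ∈ W := by simpa using hlW 0
  have hdir : ∀ (p v : Fin N → ℝ) (U : AffineSubspace ℝ (Fin N → ℝ)),
      (∀ t : ℝ, p + t • v ∈ U) → v ∈ U.direction := by
    intro p v U hl
    have := AffineSubspace.vsub_mem_direction (hl 1) (hl 0)
    simpa using this
  have hvVd : vV ∈ V.direction := hdir _ _ _ hlV
  have hvWd : vW ∈ W.direction := hdir _ _ _ hlW
  have hline : ∀ (q v : Fin N → ℝ) (U : AffineSubspace ℝ (Fin N → ℝ)),
      q ∈ U → v ∈ U.direction → ∀ s : ℝ, q + s • v ∈ U := by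
    intro q v U hq hv s
    have := AffineSubspace.vadd_mem_of_mem_direction (Submodule.smul_mem _ s hv) hq
    simpa [add_comm] using this
  constructor
  · intro h
    rw [Submodule.eq_bot_iff]
    rintro ⟨x, t⟩ hz
    obtain ⟨h1, h2⟩ := Submodule.mem_inf.mp hz
    rw [aux_mem_span_iff N V pV hpV] at h1
    rw [aux_mem_span_iff N W pW hpW] at h2
    rcases eq_or_ne t 0 with rfl | ht
    · simp only [zero_smul, sub_zero] at h1 h2
      rcases eq_or_ne x 0 with rfl | hx
      · rfl
      · exfalso
        exact (h pV x pW x hx hx (hline _ _ _ hpV h1) (hline _ _ _ hpW h2)).1 ⟨1, (one_smul _ _).symm⟩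
    · exfalso
      set q := t⁻¹ • x with hq
      have hqV : q ∈ V := by
        have : q - pV ∈ V.direction := by
          have := Submodule.smul_mem _ t⁻¹ h1
          rwa [smul_sub, smul_smul, inv_mul_cancel₀ ht, one_smul] at this
        have := AffineSubspace.vadd_mem_of_mem_direction this hpV
        simpa [sub_add_cancel] using this
      have hqW : q ∈ W := by
        have : q - pW ∈ W.direction := by
          have := Submodule.smul_mem _ t⁻¹ h2
          rwa [smul_sub, smul_smul, inv_mul_cancel₀ ht, one_smul] at this
        have := AffineSubspace.vadd_mem_of_mem_direction this hpW
        simpa [sub_add_cancel] using this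
      exact (h q vV q vW hvV hvW (hline _ _ _ hqV hvVd) (hline _ _ _ hqW hvWd)).2 0 0 (by simp)
  · intro h p₁ v₁ p₂ v₂ hv₁ hv₂ hl₁ hl₂
    have hp₁ : p₁ ∈ V := by simpa using hl₁ 0
    have hp₂ : p₂ ∈ W := by simpa using hl₂ 0
    have hv₁d : v₁ ∈ V.direction := hdir _ _ _ hl₁
    have hv₂d : v₂ ∈ W.direction := hdir _ _ _ hl₂
    constructor
    · rintro ⟨c, rfl⟩
      have hmem : ((c • v₁, (0 : ℝ)) : (Fin N → ℝ) × ℝ) ∈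
          Submodule.span ℝ ((fun a => (a, (1 : ℝ))) '' (V : Set (Fin N → ℝ))) ⊓
          Submodule.span ℝ ((fun a => (a, (1 : ℝ))) '' (W : Set (Fin N → ℝ))) := by
        rw [Submodule.mem_inf, aux_mem_span_iff N V pV hpV, aux_mem_span_iff N W pW hpW]
        constructor
        · simpa using Submodule.smul_mem _ c hv₁d
        · simpa using hv₂d
      rw [h, Submodule.mem_bot] at hmem
      exact hv₂ (congrArg Prod.fst hmem)
    · intro s t heq
      set q := p₁ + s • v₁ with hqdef
      have hqV : q ∈ V := hl₁ s
      have hqW : q ∈ W := heq ▸ hl₂ t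
      have hmem : ((q, (1 : ℝ)) : (Fin N → ℝ) × ℝ) ∈
          Submodule.span ℝ ((fun a => (a, (1 : ℝ))) '' (V : Set (Fin N → ℝ))) ⊓
          Submodule.span ℝ ((fun a => (a, (1 : ℝ))) '' (W : Set (Fin N → ℝ))) := by
        rw [Submodule.mem_inf, aux_mem_span_iff N V pV hpV, aux_mem_span_iff N W pW hpW]
        constructor
        · simpa using AffineSubspace.vsub_mem_direction hqV hpV
        · simpa using AffineSubspace.vsub_mem_direction hqW hpW
      rw [h, Submodule.mem_bot] at hmem
      exact one_ne_zero (congrArg Prod.snd hmem)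
end

section
/- Let B : ℝ^(n+1) × ℝ^(n+1) → ℝᵐ be a symmetric nonsingular bilinear map. Then the embedding Sⁿ → ℝ^(n+1) × ℝᵐ given by x ↦ (x, B(x,x)) is totally skew: for distinct x ≠ y in Sⁿ, the tangent spaces (as affine subspaces) at the corresponding points contain no pair of parallel or intersecting lines. -/
/-!
Both statements reduce to the nonsingularity of `B`. A common direction
`(v, 2B(x,v)) = (v, 2B(y,v))` gives `B(x - y, v) = 0`, hence `v = 0`. A common point
`x + v = y + w` of the tangent spaces gives, by symmetry, `B(x - y, v + w) = 0`, hence `w = -v`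
and `x - y = w - v = 2w = -2v`; the tangency conditions `⟨v, x⟩ = ⟨w, y⟩ = 0` then say that
`x - y` is orthogonal to both `x` and `y`, so `x = y`.
-/

section Bilinear

variable {R E F : Type*} [CommRing R] [AddCommGroup E] [Module R E] [AddCommGroup F] [Module R F]
  (B : E →ₗ[R] E →ₗ[R] F)

theorem LinearMap.eq_zero_of_apply_eq_apply (hB : ∀ x y, B x y = 0 → x = 0 ∨ y = 0)
    {x y v : E} (hxy : x ≠ y) (h : B x v = B y v) : v = 0 :=
  (hB (x - y) v (by rw [map_sub, LinearMap.sub_apply, h, sub_self])).resolve_left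
    (sub_ne_zero.mpr hxy)

/-- With `Q p = B p p`, both sides of `h₂` are `Q (x + v) - Q v` and `Q (y + w) - Q w`, so
`Q v = Q w`, and `B (x - y) (v + w) = B (w - v) (w + v) = Q w - Q v`. -/
theorem LinearMap.apply_sub_add_eq_zero_of_tangent_eq (hsymm : ∀ x y, B x y = B y x)
    {x y v w : E} (h₁ : x + v = y + w)
    (h₂ : B x x + (2 : R) • B x v = B y y + (2 : R) • B y w) :
    B (x - y) (v + w) = 0 := by
  obtain rfl : w = x + v - y := by rw [h₁]; abel
  have hxy := hsymm x y
  simp only [map_sub, map_add, LinearMap.sub_apply, smul_sub, smul_add] at h₂ ⊢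
  linear_combination (norm := module) h₂ - hxy

end Bilinear

theorem eq_of_inner_sub_left_eq_zero {𝕜 E : Type*} [RCLike 𝕜] [NormedAddCommGroup E]
    [InnerProductSpace 𝕜 E] {x y : E} (hx : inner 𝕜 (x - y) x = 0)
    (hy : inner 𝕜 (x - y) y = 0) :
    x = y := by
  rw [← sub_eq_zero, ← inner_self_eq_zero (𝕜 := 𝕜), inner_sub_right, hx, hy, sub_zero]

theorem bilinear_sphere_totally_skew_general (n m : ℕ)
    (B : EuclideanSpace ℝ (Fin (n + 1)) →ₗ[ℝ] EuclideanSpace ℝ (Fin (n + 1)) →ₗ[ℝ]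
      EuclideanSpace ℝ (Fin m))
    (hsymm : ∀ x y, B x y = B y x)
    (hns : ∀ x y, B x y = 0 → x = 0 ∨ y = 0)
    (x y : EuclideanSpace ℝ (Fin (n + 1))) (hxy : x ≠ y) :
    (∀ u : EuclideanSpace ℝ (Fin (n + 1)) × EuclideanSpace ℝ (Fin m),
        (∃ v, (inner ℝ v x : ℝ) = 0 ∧ u = (v, (2 : ℝ) • B x v)) →
        (∃ w, (inner ℝ w y : ℝ) = 0 ∧ u = (w, (2 : ℝ) • B y w)) → u = 0) ∧
    (∀ (v w : EuclideanSpace ℝ (Fin (n + 1))),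
        (inner ℝ v x : ℝ) = 0 → (inner ℝ w y : ℝ) = 0 →
        ((x, B x x) : EuclideanSpace ℝ (Fin (n + 1)) × EuclideanSpace ℝ (Fin m)) +
            (v, (2 : ℝ) • B x v) ≠ (y, B y y) + (w, (2 : ℝ) • B y w)) := by
  constructor
  · rintro u ⟨v, -, rfl⟩ ⟨w, -, huw⟩
    obtain ⟨rfl, hB⟩ := Prod.mk.inj huw
    have hv : v = 0 := B.eq_zero_of_apply_eq_apply hns hxy (smul_right_injective _ two_ne_zero hB)
    simp [hv]
  · intro v w hv hw heq
    rw [Prod.mk_add_mk, Prod.mk_add_mk, Prod.mk.injEq] at heq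
    obtain ⟨h₁, h₂⟩ := heq
    have hvw : v + w = 0 :=
      (hns _ _ (B.apply_sub_add_eq_zero_of_tangent_eq hsymm h₁ h₂)).resolve_left
        (sub_ne_zero.mpr hxy)
    have hdiff : x - y = w - v := sub_eq_sub_iff_add_eq_add.mpr (h₁.trans (add_comm y w))
    have hx : inner ℝ (x - y) x = 0 := by
      rw [hdiff, eq_neg_of_add_eq_zero_right hvw, inner_sub_left, inner_neg_left, hv,
        neg_zero, sub_self]
    have hy : inner ℝ (x - y) y = 0 := by
      rw [hdiff, eq_neg_of_add_eq_zero_left hvw, inner_sub_left, inner_neg_left, hw,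
        neg_zero, sub_self]
    exact hxy (eq_of_inner_sub_left_eq_zero hx hy)

/-- Let `B : ℝ^(n+1) × ℝ^(n+1) → ℝᵐ` be a symmetric nonsingular bilinear map.  Then
`x ↦ (x, B(x,x))` is a totally skew embedding of `Sⁿ`: for distinct `x ≠ y` on the unit
sphere, the direction spaces `{(v, 2B(x,v)) : ⟨v,x⟩ = 0}` and `{(w, 2B(y,w)) : ⟨w,y⟩ = 0}`
of the affine tangent spaces intersect only in `0`, and the affine tangent spaces are
disjoint. -/
theorem bilinear_sphere_totally_skew (n m : ℕ)
    (B : EuclideanSpace ℝ (Fin (n + 1)) →ₗ[ℝ] EuclideanSpace ℝ (Fin (n + 1)) →ₗ[ℝ]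
      EuclideanSpace ℝ (Fin m))
    (hsymm : ∀ x y, B x y = B y x)
    (hns : ∀ x y, B x y = 0 → x = 0 ∨ y = 0)
    (x y : EuclideanSpace ℝ (Fin (n + 1))) (hx : ‖x‖ = 1) (hy : ‖y‖ = 1) (hxy : x ≠ y) :
    (∀ u : EuclideanSpace ℝ (Fin (n + 1)) × EuclideanSpace ℝ (Fin m),
        (∃ v, (inner ℝ v x : ℝ) = 0 ∧ u = (v, (2 : ℝ) • B x v)) →
        (∃ w, (inner ℝ w y : ℝ) = 0 ∧ u = (w, (2 : ℝ) • B y w)) → u = 0) ∧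
    (∀ (v w : EuclideanSpace ℝ (Fin (n + 1))),
        (inner ℝ v x : ℝ) = 0 → (inner ℝ w y : ℝ) = 0 →
        ((x, B x x) : EuclideanSpace ℝ (Fin (n + 1)) × EuclideanSpace ℝ (Fin m)) +
            (v, (2 : ℝ) • B x v) ≠ (y, B y y) + (w, (2 : ℝ) • B y w)) :=
  bilinear_sphere_totally_skew_general n m B hsymm hns x y hxy
end

section
/- Suppose n + q = 2^r + m with 0 ≤ m < 2^r, q ≤ n, q ≥ 1, and the binomial coefficients C(n+q, i) are even for all i with q ≤ i ≤ n−1. Then q > m, and hence 2^r − q ≤ n ≤ 2^r − 1. -/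
/-- By Kummer/Lucas, `C(2^r + m, m)` is odd when `m < 2^r`. -/
lemma odd_choose_two_pow_add (r : ℕ) : ∀ m : ℕ, m < 2 ^ r → Odd ((2 ^ r + m).choose m) := by
  induction r with
  | zero =>
    intro m hm
    interval_cases m
    simp
  | succ r ih =>
    intro m hm
    haveI : Fact (Nat.Prime 2) := ⟨Nat.prime_two⟩
    have h := Choose.choose_modEq_choose_mod_mul_choose_div_nat
      (p := 2) (n := 2 ^ (r + 1) + m) (k := m)
    have h1 : (2 ^ (r + 1) + m) % 2 = m % 2 := by
      omega
    have h2 : (2 ^ (r + 1) + m) / 2 = 2 ^ r + m / 2 := by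
      rw [pow_succ]
      omega
    have h3 : m / 2 < 2 ^ r := by
      rw [pow_succ] at hm
      omega
    have h4 : Odd ((2 ^ r + m / 2).choose (m / 2)) := ih _ h3
    rw [Nat.odd_iff] at h4 ⊢
    have h5 : (m % 2).choose (m % 2) = 1 := Nat.choose_self _
    unfold Nat.ModEq at h
    rw [h1, h2, h5, one_mul, h4] at h
    omega

/-- Suppose `n + q = 2^r + m` with `0 ≤ m < 2^r`, `1 ≤ q ≤ n`, and the binomial
coefficients `C(n+q, i)` are even for all `q ≤ i ≤ n−1`.  Then `q > m`, and hence
`2^r − q ≤ n ≤ 2^r − 1`. -/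
theorem binomial_even_range_bound (n q r m : ℕ) (hn : 1 ≤ n) (hq : 1 ≤ q) (hqn : q ≤ n)
    (hsum : n + q = 2 ^ r + m) (hm : m < 2 ^ r)
    (heven : ∀ i, q ≤ i → i ≤ n - 1 → Even (Nat.choose (n + q) i)) :
    q > m ∧ 2 ^ r - q ≤ n ∧ n ≤ 2 ^ r - 1 := by
  have hqm : q > m := by
    by_contra hle
    push_neg at hle
    have hmn : m ≤ n - 1 := by omega
    have := heven m hle hmn
    have hodd : Odd ((n + q).choose m) := by
      rw [hsum]; exact odd_choose_two_pow_add r m hm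
    exact (Nat.not_even_iff_odd.mpr hodd) this
  exact ⟨hqm, by omega, by omega⟩
end

section
/- Let M₁ ⊂ ℝᴺ and M₂ ⊂ ℝᴺ be compact C¹ submanifolds of dimensions n₁, n₂ ≥ 1 forming a totally skew pair. Then the map f : M₁ × M₂ → S^(N−1), f(x,y) = (x−y)/‖x−y‖, is well-defined and has everywhere injective differential; in particular N − 1 ≥ n₁ + n₂. -/
/-!
The Gauss map is the normalization `z ↦ z / ‖z‖` composed with `(x, y) ↦ x - y`, and the
differential of the normalization at `z ≠ 0` kills exactly the multiples of `z`. So a pair of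
tangent vectors `(v, w)` is killed only if `v - w ∈ ℝ (x - y)`. Disjointness of the affine
tangent spaces says `x - y ∉ T₁ x ⊕ T₂ y`, which forces `v - w = 0`, and then `v = w = 0` since
the direction spaces meet only in `0`. The same fact `x - y ∉ T₁ x ⊕ T₂ y` shows that
`T₁ x ⊕ T₂ y` is a proper subspace of `ℝᴺ`, whence `n₁ + n₂ < N`.
-/

/-- `M` is an `n`-dimensional C¹ submanifold of `ℝᴺ` with tangent-direction assignment
`T` (the tangent space at `x ∈ M`, translated to the origin, is `T x`): near each of
its points, `M` is the image of an injective C¹ parametrization from an open subset of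
`ℝⁿ` whose differential has range the assigned tangent direction. -/
def IsC1Submanifold {N : ℕ} (n : ℕ) (M : Set (EuclideanSpace ℝ (Fin N)))
    (T : EuclideanSpace ℝ (Fin N) → Submodule ℝ (EuclideanSpace ℝ (Fin N))) : Prop :=
  ∀ x ∈ M, Module.finrank ℝ (T x) = n ∧
    ∃ (U : Set (EuclideanSpace ℝ (Fin N)))
      (φ : EuclideanSpace ℝ (Fin n) → EuclideanSpace ℝ (Fin N))
      (V : Set (EuclideanSpace ℝ (Fin n))) (u : EuclideanSpace ℝ (Fin n)),
        IsOpen U ∧ x ∈ U ∧ IsOpen V ∧ u ∈ V ∧ φ u = x ∧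
        ContDiffOn ℝ 1 φ V ∧ Set.InjOn φ V ∧ φ '' V = M ∩ U ∧
        ∀ v ∈ V, LinearMap.range (fderiv ℝ φ v : EuclideanSpace ℝ (Fin n) →ₗ[ℝ] EuclideanSpace ℝ (Fin N)) = T (φ v)

/-- `M₁` and `M₂` (with tangent assignments `T₁`, `T₂`) form a totally skew pair:
for all `x ∈ M₁`, `y ∈ M₂` the affine tangent spaces are disjoint and their
direction spaces meet only in `0`. -/
def TotallySkewPair {N : ℕ} (M₁ M₂ : Set (EuclideanSpace ℝ (Fin N)))
    (T₁ T₂ : EuclideanSpace ℝ (Fin N) → Submodule ℝ (EuclideanSpace ℝ (Fin N))) : Prop :=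
  ∀ x ∈ M₁, ∀ y ∈ M₂,
    (T₁ x ⊓ T₂ y = ⊥) ∧ (∀ u ∈ T₁ x, ∀ w ∈ T₂ y, x + u ≠ y + w)

open Module Submodule

section Normalization

variable {E : Type*} [NormedAddCommGroup E] [InnerProductSpace ℝ E]

lemma differentiableAt_normalize {z : E} (hz : z ≠ 0) :
    DifferentiableAt ℝ (fun y : E => ‖y‖⁻¹ • y) z :=
  ((differentiableAt_id.norm ℝ hz).inv (norm_ne_zero_iff.mpr hz)).smul differentiableAt_id

-- Differentiate `‖y‖ • (‖y‖⁻¹ • y) = y` by the product rule.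
lemma mem_span_of_fderiv_normalize_eq_zero {z h : E} (hz : z ≠ 0)
    (hh : fderiv ℝ (fun y : E => ‖y‖⁻¹ • y) z h = 0) : h ∈ span ℝ {z} := by
  have hid : (fun y : E => ‖y‖ • (‖y‖⁻¹ • y)) = id := by
    funext y
    rcases eq_or_ne y 0 with rfl | hy
    · simp
    · simp [smul_smul, mul_inv_cancel₀ (norm_ne_zero_iff.mpr hy)]
  have hprod : HasFDerivAt (fun y : E => ‖y‖ • (‖y‖⁻¹ • y))
      (‖z‖ • fderiv ℝ (fun y : E => ‖y‖⁻¹ • y) z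
        + (fderiv ℝ (fun y : E => ‖y‖) z).smulRight (‖z‖⁻¹ • z)) z :=
    (differentiableAt_id.norm ℝ hz).hasFDerivAt.smul (differentiableAt_normalize hz).hasFDerivAt
  rw [hid] at hprod
  have hh' := congrArg (· h) (hprod.unique (hasFDerivAt_id z))
  simp only [add_apply, smul_apply, ContinuousLinearMap.smulRight_apply,
    ContinuousLinearMap.id_apply, hh, smul_zero, zero_add, smul_smul] at hh'
  exact mem_span_singleton.mpr ⟨_, hh'⟩

end Normalization

lemma fderiv_comp_sub_apply {𝕜 E F : Type*} [NontriviallyNormedField 𝕜]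
    [NormedAddCommGroup E] [NormedSpace 𝕜 E] [NormedAddCommGroup F] [NormedSpace 𝕜 F]
    {g : E → F} {x y : E} (hg : DifferentiableAt 𝕜 g (x - y)) (v w : E) :
    fderiv 𝕜 (fun p : E × E => g (p.1 - p.2)) (x, y) (v, w) = fderiv 𝕜 g (x - y) (v - w) := by
  have hcomp : HasFDerivAt (fun p : E × E => g (p.1 - p.2))
      ((fderiv 𝕜 g (x - y)).comp (ContinuousLinearMap.fst 𝕜 E E - ContinuousLinearMap.snd 𝕜 E E))
      (x, y) :=
    hg.hasFDerivAt.comp (x, y) (hasFDerivAt_fst.sub hasFDerivAt_snd)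
  rw [hcomp.fderiv]
  rfl

section Skew

variable {K V : Type*} [DivisionRing K] [AddCommGroup V] [Module K V] {S T : Submodule K V}

lemma sub_notMem_sup_of_forall_add_ne {x y : V} (h : ∀ u ∈ S, ∀ w ∈ T, x + u ≠ y + w) :
    x - y ∉ S ⊔ T := by
  intro hxy
  obtain ⟨u, hu, w, hw, huw⟩ := mem_sup.mp hxy
  exact h (-u) (neg_mem hu) w hw (by rw [← sub_eq_zero, ← sub_eq_zero.mpr huw.symm]; abel)

lemma eq_zero_of_sub_mem_span_of_notMem_sup (hST : S ⊓ T = ⊥) {z v w : V} (hz : z ∉ S ⊔ T)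
    (hv : v ∈ S) (hw : w ∈ T) (hvw : v - w ∈ span K {z}) : v = 0 ∧ w = 0 := by
  obtain ⟨c, hc⟩ := mem_span_singleton.mp hvw
  have hc0 : c = 0 := by
    by_contra hc0
    exact hz ((smul_mem_iff _ hc0).mp (hc ▸ sub_mem (mem_sup_left hv) (mem_sup_right hw)))
  have hvw : v = w := sub_eq_zero.mp (by rw [← hc, hc0, zero_smul])
  have hv0 : v ∈ S ⊓ T := ⟨hv, hvw ▸ hw⟩
  rw [hST, mem_bot] at hv0
  exact ⟨hv0, hvw ▸ hv0⟩

lemma finrank_add_finrank_lt_of_notMem_sup [FiniteDimensional K V] (hST : S ⊓ T = ⊥) {z : V}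
    (hz : z ∉ S ⊔ T) : finrank K S + finrank K T < finrank K V := by
  have hlt := finrank_lt (s := S ⊔ T) fun htop => hz (htop ▸ mem_top)
  rwa [← finrank_sup_add_finrank_inf_eq, hST, finrank_bot, add_zero]

end Skew

namespace TotallySkewPair

variable {N : ℕ} {M₁ M₂ : Set (EuclideanSpace ℝ (Fin N))}
  {T₁ T₂ : EuclideanSpace ℝ (Fin N) → Submodule ℝ (EuclideanSpace ℝ (Fin N))}
  {x y : EuclideanSpace ℝ (Fin N)}

lemma sub_notMem_sup (h : TotallySkewPair M₁ M₂ T₁ T₂) (hx : x ∈ M₁) (hy : y ∈ M₂) :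
    x - y ∉ T₁ x ⊔ T₂ y :=
  sub_notMem_sup_of_forall_add_ne (h x hx y hy).2

lemma ne (h : TotallySkewPair M₁ M₂ T₁ T₂) (hx : x ∈ M₁) (hy : y ∈ M₂) : x ≠ y := fun hxy =>
  h.sub_notMem_sup hx hy (by rw [hxy, sub_self]; exact zero_mem _)

end TotallySkewPair

theorem gauss_map_of_skew_pair_immersive_general (N n₁ n₂ : ℕ)
    (M₁ M₂ : Set (EuclideanSpace ℝ (Fin N)))
    (T₁ T₂ : EuclideanSpace ℝ (Fin N) → Submodule ℝ (EuclideanSpace ℝ (Fin N)))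
    (hM₁ : IsC1Submanifold n₁ M₁ T₁) (hM₂ : IsC1Submanifold n₂ M₂ T₂)
    (hne₁ : M₁.Nonempty) (hne₂ : M₂.Nonempty)
    (hskew : TotallySkewPair M₁ M₂ T₁ T₂) :
    (∀ x ∈ M₁, ∀ y ∈ M₂, x ≠ y) ∧
    (∀ x ∈ M₁, ∀ y ∈ M₂, ∀ v ∈ T₁ x, ∀ w ∈ T₂ y,
      fderiv ℝ (fun p : EuclideanSpace ℝ (Fin N) × EuclideanSpace ℝ (Fin N) =>
          ‖p.1 - p.2‖⁻¹ • (p.1 - p.2)) (x, y) (v, w) = 0 → v = 0 ∧ w = 0) ∧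
    N - 1 ≥ n₁ + n₂ := by
  refine ⟨fun x hx y hy => hskew.ne hx hy, ?_, ?_⟩
  · intro x hx y hy v hv w hw hD
    have hxy : x - y ≠ 0 := sub_ne_zero.mpr (hskew.ne hx hy)
    have hspan : v - w ∈ span ℝ {x - y} := mem_span_of_fderiv_normalize_eq_zero hxy
      ((fderiv_comp_sub_apply (differentiableAt_normalize hxy) v w).symm.trans hD)
    exact eq_zero_of_sub_mem_span_of_notMem_sup (hskew x hx y hy).1 (hskew.sub_notMem_sup hx hy)
      hv hw hspan
  · obtain ⟨x, hx⟩ := hne₁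
    obtain ⟨y, hy⟩ := hne₂
    have hlt := finrank_add_finrank_lt_of_notMem_sup (hskew x hx y hy).1
      (hskew.sub_notMem_sup hx hy)
    rw [(hM₁ x hx).1, (hM₂ y hy).1, finrank_euclideanSpace_fin] at hlt
    omega

/-- If `M₁, M₂ ⊂ ℝᴺ` are compact C¹ submanifolds of dimensions `n₁, n₂ ≥ 1` forming a
totally skew pair, then the Gauss map `f(x,y) = (x−y)/‖x−y‖` is well defined
(`x ≠ y` for `x ∈ M₁`, `y ∈ M₂`) and its differential — the derivative of
`(x,y) ↦ (x−y)/‖x−y‖` applied to pairs of tangent vectors — is everywhere injective;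
in particular `N − 1 ≥ n₁ + n₂`. -/
theorem gauss_map_of_skew_pair_immersive (N n₁ n₂ : ℕ) (hn₁ : 1 ≤ n₁) (hn₂ : 1 ≤ n₂)
    (M₁ M₂ : Set (EuclideanSpace ℝ (Fin N)))
    (T₁ T₂ : EuclideanSpace ℝ (Fin N) → Submodule ℝ (EuclideanSpace ℝ (Fin N)))
    (hM₁ : IsC1Submanifold n₁ M₁ T₁) (hM₂ : IsC1Submanifold n₂ M₂ T₂)
    (hc₁ : IsCompact M₁) (hc₂ : IsCompact M₂)
    (hne₁ : M₁.Nonempty) (hne₂ : M₂.Nonempty)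
    (hskew : TotallySkewPair M₁ M₂ T₁ T₂) :
    (∀ x ∈ M₁, ∀ y ∈ M₂, x ≠ y) ∧
    (∀ x ∈ M₁, ∀ y ∈ M₂, ∀ v ∈ T₁ x, ∀ w ∈ T₂ y,
      fderiv ℝ (fun p : EuclideanSpace ℝ (Fin N) × EuclideanSpace ℝ (Fin N) =>
          ‖p.1 - p.2‖⁻¹ • (p.1 - p.2)) (x, y) (v, w) = 0 → v = 0 ∧ w = 0) ∧
    N - 1 ≥ n₁ + n₂ :=
  gauss_map_of_skew_pair_immersive_general N n₁ n₂ M₁ M₂ T₁ T₂ hM₁ hM₂ hne₁ hne₂ hskew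
end
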